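/- For any finite family {P_b}_{b∈B} of convex polyhedra in V, there exists a PL-stratification {Z_a}_{a∈A} of V such that each P_b is a union of strata, i.e. for every b ∈ B there is a subset A_b ⊆ A with P_b = ⋃_{a∈A_b} Z_a. -/
import Mathlib


open Set

/-- An (open or closed) affine half-space in a real vector space. -/
def IsHalfspace {V : Type*} [AddCommGroup V] [Module ℝ V] (H : Set V) : Prop :=
  ∃ (f : V →ₗ[ℝ] ℝ) (c : ℝ), H = {x | f x < c} ∨ H = {x | f x ≤ c}

/-- A convex polyhedron: the intersection of finitely many open or closed affine
half-spaces (the empty intersection being the whole space). -/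
def IsConvexPolyhedron {V : Type*} [AddCommGroup V] [Module ℝ V] (P : Set V) : Prop :=
  ∃ (n : ℕ) (H : Fin n → Set V), (∀ i, IsHalfspace (H i)) ∧ P = ⋂ i, H i

/-- A PL (piecewise linear) set: a finite union of convex polyhedra. -/
def IsPL {V : Type*} [AddCommGroup V] [Module ℝ V] (S : Set V) : Prop :=
  ∃ (n : ℕ) (P : Fin n → Set V), (∀ i, IsConvexPolyhedron (P i)) ∧ S = ⋃ i, P i


/-- A PL-stratification of `V`: a finite family of nonempty convex polyhedra which are
pairwise disjoint, cover `V`, are open in their affine spans, and satisfy the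
frontier condition. -/
def IsPLStratification {V : Type*} [NormedAddCommGroup V] [NormedSpace ℝ V]
    {n : ℕ} (Z : Fin n → Set V) : Prop :=
  (∀ a, (Z a).Nonempty ∧ IsConvexPolyhedron (Z a)) ∧
  (⋃ a, Z a) = Set.univ ∧
  (∀ a, ∃ U : Set V, IsOpen U ∧ Z a = U ∩ (affineSpan ℝ (Z a) : Set V)) ∧
  (∀ a b, a ≠ b → Z a ∩ Z b = ∅) ∧
  (∀ a b, (Z a ∩ closure (Z b)).Nonempty → Z a ⊆ closure (Z b))

section Helpers

variable {V : Type*} [AddCommGroup V] [Module ℝ V]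

theorem isConvexPolyhedron_iInter' {ι : Type*} [Fintype ι] (P : ι → Set V)
    (h : ∀ i, IsConvexPolyhedron (P i)) : IsConvexPolyhedron (⋂ i, P i) := by
  classical
  choose n H hH hPe using h
  let T := Σ i : ι, Fin (n i)
  let e : Fin (Fintype.card T) ≃ T := (Fintype.equivFin T).symm
  refine ⟨Fintype.card T, fun k => H (e k).1 (e k).2, fun k => hH _ _, ?_⟩
  ext x
  simp only [mem_iInter, hPe]
  constructor
  · intro hx k; exact hx (e k).1 (e k).2
  · intro hx i j
    have key : ∀ t : T, x ∈ H t.1 t.2 := by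
      intro t
      have := hx (e.symm t)
      rwa [Equiv.apply_symm_apply] at this
    exact key ⟨i, j⟩

/-- The affine subspace `{x | f x = c}`. -/
def eqAff (f : V →ₗ[ℝ] ℝ) (c : ℝ) : AffineSubspace ℝ V where
  carrier := {x | f x = c}
  smul_vsub_vadd_mem' := by
    intro t p1 p2 p3 h1 h2 h3
    simp only [mem_setOf_eq] at h1 h2 h3 ⊢
    simp only [vsub_eq_sub, vadd_eq_add, map_add, map_smul, map_sub, h1, h2, h3,
      smul_eq_mul]
    ring

/-- The polyhedron attached to a sign value. -/
def sgnSet (s : SignType) (f : V →ₗ[ℝ] ℝ) (c : ℝ) : Set V :=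
  match s with
  | .neg => {x | f x < c}
  | .zero => {x | f x = c}
  | .pos => {x | c < f x}

theorem mem_sgnSet_iff {s : SignType} {f : V →ₗ[ℝ] ℝ} {c : ℝ} {x : V} :
    x ∈ sgnSet s f c ↔ SignType.sign (f x - c) = s := by
  cases s <;>
    simp [sgnSet, sign_eq_neg_one_iff, sign_eq_zero_iff, sign_eq_one_iff,
      sub_neg, sub_eq_zero, sub_pos]

theorem sgnSet_polyhedron (s : SignType) (f : V →ₗ[ℝ] ℝ) (c : ℝ) :
    IsConvexPolyhedron (sgnSet s f c) := by
  cases s with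
  | neg => exact ⟨1, fun _ => {x | f x < c}, fun _ => ⟨f, c, Or.inl rfl⟩, (iInter_const _).symm⟩
  | zero =>
    refine ⟨2, ![{x | f x ≤ c}, {x | (-f) x ≤ -c}], ?_, ?_⟩
    · intro i
      fin_cases i
      · exact ⟨f, c, Or.inr rfl⟩
      · exact ⟨-f, -c, Or.inr rfl⟩
    · ext x
      simp only [mem_iInter, Fin.forall_fin_two]
      simp [sgnSet, le_antisymm_iff, neg_le, and_comm]
  | pos =>
    refine ⟨1, fun _ => {x | (-f) x < -c}, fun _ => ⟨-f, -c, Or.inl rfl⟩, ?_⟩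
    ext x
    simp [sgnSet, neg_lt_neg_iff]

/-- The weak (closed) version of `sgnSet`. -/
def wkSet (s : SignType) (f : V →ₗ[ℝ] ℝ) (c : ℝ) : Set V :=
  match s with
  | .neg => {x | f x ≤ c}
  | .zero => {x | f x = c}
  | .pos => {x | c ≤ f x}

theorem sgnSet_subset_wkSet (s : SignType) (f : V →ₗ[ℝ] ℝ) (c : ℝ) :
    sgnSet s f c ⊆ wkSet s f c := by
  cases s <;> intro x hx <;> simp [sgnSet, wkSet] at hx ⊢ <;> first | exact hx.le | exact hx

/-- The open "approximation": drop equalities. -/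
def opSet (s : SignType) (f : V →ₗ[ℝ] ℝ) (c : ℝ) : Set V :=
  match s with
  | .neg => {x | f x < c}
  | .zero => univ
  | .pos => {x | c < f x}

theorem sgnSet_subset_opSet (s : SignType) (f : V →ₗ[ℝ] ℝ) (c : ℝ) :
    sgnSet s f c ⊆ opSet s f c := by
  cases s <;> intro x hx <;> simp [sgnSet, opSet] at hx ⊢ <;> exact hx

theorem sign_trans_lt {a b : ℝ} (h : SignType.sign a = SignType.sign b) (ha : a < 0) :
    b < 0 := by
  have : SignType.sign b = -1 := h ▸ sign_eq_neg_one_iff.mpr ha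
  exact sign_eq_neg_one_iff.mp this

theorem sign_trans_eq {a b : ℝ} (h : SignType.sign a = SignType.sign b) (ha : a = 0) :
    b = 0 := by
  have : SignType.sign b = 0 := h ▸ sign_eq_zero_iff.mpr ha
  exact sign_eq_zero_iff.mp this

theorem sign_trans_gt {a b : ℝ} (h : SignType.sign a = SignType.sign b) (ha : 0 < a) :
    0 < b := by
  have : SignType.sign b = 1 := h ▸ sign_eq_one_iff.mpr ha
  exact sign_eq_one_iff.mp this

theorem sign_trans_le {a b : ℝ} (h : SignType.sign a = SignType.sign b) (ha : a ≤ 0) :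
    b ≤ 0 := by
  rcases ha.lt_or_eq with h1 | h1
  · exact (sign_trans_lt h h1).le
  · exact (sign_trans_eq h h1).le

theorem sign_trans_ge {a b : ℝ} (h : SignType.sign a = SignType.sign b) (ha : 0 ≤ a) :
    0 ≤ b := by
  rcases ha.lt_or_eq with h1 | h1
  · exact (sign_trans_gt h h1).le
  · exact (sign_trans_eq h h1.symm).ge

/-- Two points with the same sign lie in the same weak sets. -/
theorem wk_of_sign_eq {s : SignType} {f : V →ₗ[ℝ] ℝ} {c : ℝ} {x y : V}
    (h : SignType.sign (f x - c) = SignType.sign (f y - c))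
    (hx : x ∈ wkSet s f c) : y ∈ wkSet s f c := by
  cases s with
  | neg =>
    simp only [wkSet, mem_setOf_eq] at hx ⊢
    have := sign_trans_le h (sub_nonpos.mpr hx); linarith
  | zero =>
    simp only [wkSet, mem_setOf_eq] at hx ⊢
    have := sign_trans_eq h (sub_eq_zero.mpr hx); linarith
  | pos =>
    simp only [wkSet, mem_setOf_eq] at hx ⊢
    have := sign_trans_ge h (sub_nonneg.mpr hx); linarith

/-- Interpolation: a convex combination of a point of `sgnSet` and a point of
`wkSet`, with positive weight on the first, lies in `sgnSet`. -/
theorem sgnSet_interp {s : SignType} {f : V →ₗ[ℝ] ℝ} {c : ℝ} {x y : V} {t : ℝ}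
    (hy : y ∈ sgnSet s f c) (hx : x ∈ wkSet s f c) (ht0 : 0 ≤ t) (ht1 : t < 1) :
    y + t • (x - y) ∈ sgnSet s f c := by
  have hval : f (y + t • (x - y)) = (1 - t) * f y + t * f x := by
    simp only [map_add, map_smul, map_sub, smul_eq_mul]; ring
  cases s <;> simp only [sgnSet, mem_setOf_eq, wkSet] at hy hx ⊢ <;> rw [hval] <;>
    nlinarith

end Helpers

theorem exists_PLStratification_finer {V : Type*} [NormedAddCommGroup V]
    [NormedSpace ℝ V] [FiniteDimensional ℝ V] (m : ℕ) (P : Fin m → Set V)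
    (hP : ∀ b, IsConvexPolyhedron (P b)) :
    ∃ (n : ℕ) (Z : Fin n → Set V), IsPLStratification Z ∧
      ∀ b, ∃ A : Set (Fin n), P b = ⋃ a ∈ A, Z a := by
  classical
  choose N HS hHalf hPeq using hP
  let I := Σ b : Fin m, Fin (N b)
  choose f c hfc using fun i : I => hHalf i.1 i.2
  let sg : V → I → SignType := fun x i => SignType.sign (f i x - c i)
  let Z : (I → SignType) → Set V := fun σ => {x | sg x = σ}
  have memZ : ∀ {x : V} {σ : I → SignType},
      x ∈ Z σ ↔ ∀ i, SignType.sign (f i x - c i) = σ i := by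
    intro x σ; simp [Z, sg, funext_iff]
  have self_mem : ∀ x : V, x ∈ Z (sg x) := fun x => rfl
  have contf : ∀ i : I, Continuous (f i) := fun i =>
    (f i).continuous_of_finiteDimensional
  -- each cell is a convex polyhedron
  have Zpoly : ∀ σ, IsConvexPolyhedron (Z σ) := by
    intro σ
    have hZeq : Z σ = ⋂ i, sgnSet (σ i) (f i) (c i) := by
      ext x; simp [memZ, mem_iInter, mem_sgnSet_iff]
    rw [hZeq]
    exact isConvexPolyhedron_iInter' _ fun i => sgnSet_polyhedron _ _ _
  -- weak cells
  have Zsub_wk : ∀ σ, Z σ ⊆ ⋂ i, wkSet (σ i) (f i) (c i) := by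
    intro σ x hx
    exact mem_iInter.mpr fun i =>
      sgnSet_subset_wkSet _ _ _ (mem_sgnSet_iff.mpr ((memZ.mp hx) i))
  have wk_closed : ∀ σ : I → SignType, IsClosed (⋂ i, wkSet (σ i) (f i) (c i)) := by
    intro σ
    refine isClosed_iInter fun i => ?_
    cases hσ : σ i with
    | neg => exact isClosed_le (contf i) continuous_const
    | zero => exact isClosed_eq (contf i) continuous_const
    | pos => exact isClosed_le continuous_const (contf i)
  -- closure of a nonempty cell is the weak cell
  have Zclosure : ∀ σ, (Z σ).Nonempty →
      closure (Z σ) = ⋂ i, wkSet (σ i) (f i) (c i) := by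
    rintro σ ⟨y, hy⟩
    apply Subset.antisymm (closure_minimal (Zsub_wk σ) (wk_closed σ))
    intro x hx
    have hgc : Continuous (fun t : ℝ => y + t • (x - y)) :=
      continuous_const.add (continuous_id.smul continuous_const)
    have hmaps : MapsTo (fun t : ℝ => y + t • (x - y)) (Ico (0:ℝ) 1) (Z σ) := by
      intro t ht
      rw [memZ]
      intro i
      rw [← mem_sgnSet_iff]
      exact sgnSet_interp (mem_sgnSet_iff.mpr ((memZ.mp hy) i))
        (mem_iInter.mp hx i) ht.1 ht.2
    have hx1 : y + (1:ℝ) • (x - y) = x := by simp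
    have h1c : (1 : ℝ) ∈ closure (Ico (0:ℝ) 1) := by
      rw [closure_Ico zero_ne_one]
      exact ⟨zero_le_one, le_refl 1⟩
    have hmem := image_closure_subset_closure_image hgc (mem_image_of_mem _ h1c)
    rw [hx1] at hmem
    exact closure_mono hmaps.image_subset hmem
  -- frontier condition at the level of cells
  have frontier_lem : ∀ σ τ, (Z τ).Nonempty →
      (Z σ ∩ closure (Z τ)).Nonempty → Z σ ⊆ closure (Z τ) := by
    rintro σ τ hτ ⟨x, hxσ, hxc⟩
    rw [Zclosure τ hτ] at hxc ⊢
    intro y hy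
    rw [mem_iInter] at hxc ⊢
    intro i
    exact wk_of_sign_eq (((memZ.mp hxσ) i).trans ((memZ.mp hy) i).symm) (hxc i)
  -- cells are open in their affine spans
  have Zopen : ∀ σ, ∃ U : Set V, IsOpen U ∧ Z σ = U ∩ (affineSpan ℝ (Z σ) : Set V) := by
    intro σ
    refine ⟨⋂ i, opSet (σ i) (f i) (c i), isOpen_iInter_of_finite fun i => ?_, ?_⟩
    · cases hσ : σ i with
      | neg => exact isOpen_lt (contf i) continuous_const
      | zero => exact isOpen_univ
      | pos => exact isOpen_lt continuous_const (contf i)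
    · apply Subset.antisymm
      · intro x hx
        exact ⟨mem_iInter.mpr fun i =>
          sgnSet_subset_opSet _ _ _ (mem_sgnSet_iff.mpr ((memZ.mp hx) i)),
          subset_affineSpan ℝ _ hx⟩
      · rintro x ⟨hU, hspan⟩
        rw [memZ]
        intro i
        cases hi : σ i with
        | zero =>
          have hsub : Z σ ⊆ (eqAff (f i) (c i) : Set V) := by
            intro z hz
            have hz' := (memZ.mp hz) i
            rw [hi] at hz'
            exact sub_eq_zero.mp (sign_eq_zero_iff.mp hz')
          have hx' : x ∈ (eqAff (f i) (c i) : Set V) :=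
            (affineSpan_le.mpr hsub) hspan
          exact sign_eq_zero_iff.mpr (sub_eq_zero.mpr hx')
        | neg =>
          have hUi := mem_iInter.mp hU i
          rw [hi] at hUi
          exact mem_sgnSet_iff.mp hUi
        | pos =>
          have hUi := mem_iInter.mp hU i
          rw [hi] at hUi
          exact mem_sgnSet_iff.mp hUi
  -- assemble
  let Cells := {σ : I → SignType // (Z σ).Nonempty}
  let e : Fin (Fintype.card Cells) ≃ Cells := (Fintype.equivFin Cells).symm
  refine ⟨Fintype.card Cells, fun a => Z (e a).1, ⟨?_, ?_, ?_, ?_, ?_⟩, ?_⟩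
  · exact fun a => ⟨(e a).2, Zpoly _⟩
  · ext x
    simp only [mem_iUnion, mem_univ, iff_true]
    refine ⟨e.symm ⟨sg x, ⟨x, rfl⟩⟩, ?_⟩
    rw [Equiv.apply_symm_apply]
    exact self_mem x
  · exact fun a => Zopen _
  · intro a b hab
    ext x
    simp only [mem_inter_iff, mem_empty_iff_false, iff_false, not_and]
    intro h1 h2
    have e1 : sg x = (e a).1 := h1
    have e2 : sg x = (e b).1 := h2
    exact hab (e.injective (Subtype.ext (e1.symm.trans e2))) |>.elim
  · exact fun a b h => frontier_lem _ _ (e b).2 h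
  · intro b
    refine ⟨{a | Z (e a).1 ⊆ P b}, Subset.antisymm ?_ (iUnion₂_subset fun a ha => ha)⟩
    intro x hx
    have hne : (Z (sg x)).Nonempty := ⟨x, rfl⟩
    have hZa : (e (e.symm ⟨sg x, hne⟩)).1 = sg x := by rw [Equiv.apply_symm_apply]
    have hsub : Z (sg x) ⊆ P b := by
      intro y hy
      rw [hPeq b, mem_iInter]
      intro j
      have hx' : x ∈ HS b j := by
        have hx2 := hx
        rw [hPeq b, mem_iInter] at hx2
        exact hx2 j
      have hsgn : SignType.sign (f ⟨b, j⟩ x - c ⟨b, j⟩) =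
          SignType.sign (f ⟨b, j⟩ y - c ⟨b, j⟩) := ((memZ.mp hy) ⟨b, j⟩).symm
      rcases hfc ⟨b, j⟩ with hH | hH
      · have hH' : HS b j = {z | f ⟨b, j⟩ z < c ⟨b, j⟩} := hH
        rw [hH'] at hx' ⊢
        have := sign_trans_lt hsgn (sub_neg.mpr hx')
        exact sub_neg.mp this
      · have hH' : HS b j = {z | f ⟨b, j⟩ z ≤ c ⟨b, j⟩} := hH
        rw [hH'] at hx' ⊢
        have := sign_trans_le hsgn (sub_nonpos.mpr hx')
        exact sub_nonpos.mp this
    refine mem_iUnion₂.mpr ⟨e.symm ⟨sg x, hne⟩, ?_, ?_⟩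
    · show Z (e (e.symm ⟨sg x, hne⟩)).1 ⊆ P b
      rw [hZa]; exact hsub
    · show x ∈ Z (e (e.symm ⟨sg x, hne⟩)).1
      rw [hZa]; exact self_mem x
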